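/- Let p, q be relatively prime positive integers and {F_n} the (p,q)-Fibonacci sequence. Then for all positive integers a and b, gcd(F_a, F_b) = F_{gcd(a, b)}. -/

import Mathlib

open MvPolynomial

/-- The `(p,q)`-Fibonacci sequence: `F 0 = 0`, `F 1 = 1`, `F (n+2) = p * F (n+1) + q * F n`. -/
def pqFib (p q : ℕ) : ℕ → ℕ
  | 0 => 0
  | 1 => 1
  | n + 2 => p * pqFib p q (n + 1) + q * pqFib p q n

/-- The `(p,q)`-Lucas sequence: `L 0 = 2`, `L 1 = p`, `L (n+2) = p * L (n+1) + q * L n`. -/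
def pqLucas (p q : ℕ) : ℕ → ℕ
  | 0 => 2
  | 1 => p
  | n + 2 => p * pqLucas p q (n + 1) + q * pqLucas p q n

/-- The toric ideal of the affine monomial curve `t ↦ (t^{d 0}, …, t^{d (n-1)})`:
the kernel of the `k`-algebra map `k[x_1,…,x_n] → k[t]`, `x_i ↦ t^{d i}`. -/
noncomputable def toricIdeal (k : Type*) [Field k] {n : ℕ} (d : Fin n → ℕ) :
    Ideal (MvPolynomial (Fin n) k) :=
  RingHom.ker (MvPolynomial.aeval
    (fun i : Fin n => (Polynomial.X : Polynomial k) ^ d i)).toRingHom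

/-- The toric ideal `I_A` is a complete intersection iff it can be generated by
`n - 1` elements. -/
def IsCI (k : Type*) [Field k] {n : ℕ} (d : Fin n → ℕ) : Prop :=
  ∃ g : Fin (n - 1) → MvPolynomial (Fin n) k,
    Ideal.span (Set.range g) = toricIdeal k d

/-- The toric ideal of the projective monomial curve: the kernel of the `k`-algebra map
`k[x_1,…,x_{n+1}] → k[t,u]`, `x_i ↦ t^{d i} u^{D - d i}` for `i ≤ n` and
`x_{n+1} ↦ u^D`, where `D = max A`. -/
noncomputable def projToricIdeal (k : Type*) [Field k] {n : ℕ} (d : Fin n → ℕ) :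
    Ideal (MvPolynomial (Fin (n + 1)) k) :=
  RingHom.ker (MvPolynomial.aeval (fun i : Fin (n + 1) =>
    if h : (i : ℕ) < n then
      (X 0 : MvPolynomial (Fin 2) k) ^ d ⟨i, h⟩ *
        (X 1 : MvPolynomial (Fin 2) k) ^ (Finset.univ.sup d - d ⟨i, h⟩)
    else (X 1 : MvPolynomial (Fin 2) k) ^ (Finset.univ.sup d))).toRingHom

/-- The projective toric ideal `I_{A*}` is a complete intersection iff it can be
generated by `n - 1` elements. -/
def ProjIsCI (k : Type*) [Field k] {n : ℕ} (d : Fin n → ℕ) : Prop :=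
  ∃ g : Fin (n - 1) → MvPolynomial (Fin (n + 1)) k,
    Ideal.span (Set.range g) = projToricIdeal k d

/-- `d 0 < d 1 < ⋯` is a generalized arithmetic sequence: there are positive
integers `h, e` with `d i = h * d 0 + i * e` for every `i ≥ 1`. -/
def IsGenArith {n : ℕ} (d : Fin n → ℕ) : Prop :=
  ∃ h e : ℕ, 0 < h ∧ 0 < e ∧
    ∀ i : Fin n, 0 < (i : ℕ) → d i = h * d ⟨0, i.pos⟩ + (i : ℕ) * e

/-- `d 0 < d 1 < ⋯` is an increasing arithmetic sequence: there is a positive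
integer `e` with `d i = d 0 + i * e` for every `i`. -/
def IsArithFn {n : ℕ} (d : Fin n → ℕ) : Prop :=
  ∃ e : ℕ, 0 < e ∧ ∀ i : Fin n, 0 < (i : ℕ) → d i = d ⟨0, i.pos⟩ + (i : ℕ) * e

/-- `A = {d 0, …, d (n-1)}` minimally generates the numerical semigroup
`ℕ d 0 + ⋯ + ℕ d (n-1)`: no `d i` lies in the subsemigroup generated by the rest. -/
def MinimallyGenerates {n : ℕ} (d : Fin n → ℕ) : Prop :=
  ∀ i : Fin n, ¬ ∃ α : Fin n → ℕ, α i = 0 ∧ d i = ∑ j, α j * d j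

/-!
The addition formula `F (m + n + 1) = q F m F n + F (m + 1) F (n + 1)` and the coprimality of
consecutive terms give `gcd (F m) (F (n + m)) = gcd (F m) (F n)`. Hence `gcd (F a) (F b)` is
invariant under the steps of the Euclidean algorithm on `(a, b)`, which ends at `F (gcd a b)`.
Consecutive terms are coprime since `gcd (F (n + 1), F (n + 2)) = gcd (F (n + 1), q F n)` and `q` is
coprime to every `F (n + 1)`, as `F (n + 2) ≡ p F (n + 1) (mod q)` and `gcd (p, q) = 1`.
-/

namespace Nat

theorem gcd_add_mul_self_of_gcd_add_self {f : ℕ → ℕ}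
    (h : ∀ m n, gcd (f m) (f (n + m)) = gcd (f m) (f n)) (m n : ℕ) :
    ∀ k, gcd (f m) (f (n + k * m)) = gcd (f m) (f n)
  | 0 => by simp
  | k + 1 => by
    rw [add_mul, one_mul, ← add_assoc, h, gcd_add_mul_self_of_gcd_add_self h m n k]

theorem IsStrongDvdSequence.of_gcd_add_self {f : ℕ → ℕ} (h0 : f 0 = 0)
    (h : ∀ m n, gcd (f m) (f (n + m)) = gcd (f m) (f n)) : IsStrongDvdSequence f := by
  intro m n
  induction m, n using Nat.gcd.induction with
  | H0 n => simp [h0]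
  | H1 m n _ ih =>
    rw [gcd_rec m n, ← ih, ← mod_add_div' n m, gcd_add_mul_self_of_gcd_add_self h, gcd_comm,
      mod_add_div']

end Nat

section pqFib

variable {p q : ℕ}

theorem pqFib_add_two (n : ℕ) :
    pqFib p q (n + 2) = p * pqFib p q (n + 1) + q * pqFib p q n := rfl

theorem pqFib_add (m : ℕ) : ∀ n, pqFib p q (m + n + 1) =
    q * pqFib p q m * pqFib p q n + pqFib p q (m + 1) * pqFib p q (n + 1)
  | 0 => by simp [pqFib]
  | 1 => by simp only [pqFib, mul_one, mul_zero, add_zero]; ring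
  | n + 2 => by
    rw [show m + (n + 2) + 1 = m + n + 1 + 2 by omega, pqFib_add_two,
      show m + n + 1 + 1 = m + (n + 1) + 1 by omega, pqFib_add m n, pqFib_add m (n + 1),
      show n + 2 + 1 = n + 1 + 2 from rfl, pqFib_add_two (n + 1), pqFib_add_two n]
    ring

theorem coprime_pqFib_succ (hpq : Nat.Coprime p q) : ∀ n, Nat.Coprime q (pqFib p q (n + 1))
  | 0 => by simp [pqFib]
  | n + 1 => by
    rw [pqFib_add_two, Nat.coprime_add_mul_left_right]
    exact hpq.symm.mul_right (coprime_pqFib_succ hpq n)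

theorem coprime_pqFib_pqFib_succ (hpq : Nat.Coprime p q) :
    ∀ n, Nat.Coprime (pqFib p q n) (pqFib p q (n + 1))
  | 0 => by simp [pqFib]
  | n + 1 => by
    rw [pqFib_add_two, add_comm (p * _), mul_comm p, Nat.coprime_add_mul_left_right]
    exact (coprime_pqFib_succ hpq n).symm.mul_right (coprime_pqFib_pqFib_succ hpq n).symm

theorem gcd_pqFib_add_self (hpq : Nat.Coprime p q) (m n : ℕ) :
    Nat.gcd (pqFib p q m) (pqFib p q (n + m)) = Nat.gcd (pqFib p q m) (pqFib p q n) := by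
  rcases n with _ | n
  · simp [pqFib]
  · rw [add_right_comm, add_comm n m, pqFib_add, mul_right_comm q, add_comm,
      Nat.gcd_add_mul_right_right,
      (coprime_pqFib_pqFib_succ hpq m).symm.gcd_mul_left_cancel_right]

theorem isStrongDvdSequence_pqFib (hpq : Nat.Coprime p q) : Nat.IsStrongDvdSequence (pqFib p q) :=
  .of_gcd_add_self rfl (gcd_pqFib_add_self hpq)

end pqFib

theorem stmt19_general (p q : ℕ) (hpq : Nat.gcd p q = 1)
    (a b : ℕ) :
    Nat.gcd (pqFib p q a) (pqFib p q b) = pqFib p q (Nat.gcd a b) :=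
  isStrongDvdSequence_pqFib hpq a b

/-- For relatively prime positive integers `p, q` and the
`(p,q)`-Fibonacci sequence `F`, we have `gcd(F_a, F_b) = F_{gcd(a,b)}` for all
positive integers `a, b`. -/
theorem stmt19 (p q : ℕ) (hp : 0 < p) (hq : 0 < q) (hpq : Nat.gcd p q = 1)
    (a b : ℕ) (ha : 0 < a) (hb : 0 < b) :
    Nat.gcd (pqFib p q a) (pqFib p q b) = pqFib p q (Nat.gcd a b) :=
  stmt19_general p q hpq a b
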